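/- Let B be a symmetric matrix and Q a matrix with orthonormal columns. Among all matrices of the form Q X Qᵀ with rank(X) ≤ k, the choice X = ⟦Qᵀ B Q⟧_k minimizes ‖B − Q X Qᵀ‖_F. In particular, ‖B − Q ⟦Qᵀ B Q⟧_k Qᵀ‖_F ≤ ‖B − Q Y Qᵀ‖_F for every d×d matrix Y with rank(Y) ≤ k. -/
import Mathlib


open Matrix BigOperators

/-- Frobenius norm of a real matrix. -/
noncomputable def frobNorm {m n : Type*} [Fintype m] [Fintype n] (M : Matrix m n ℝ) : ℝ :=
  Real.sqrt (∑ i, ∑ j, (M i j) ^ 2)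

lemma frobSq_trace {m n : Type*} [Fintype m] [Fintype n] (M : Matrix m n ℝ) :
    (∑ i, ∑ j, (M i j) ^ 2) = Matrix.trace (Mᵀ * M) := by
  simp only [Matrix.trace, Matrix.diag, Matrix.mul_apply, Matrix.transpose_apply, sq]
  rw [Finset.sum_comm]

lemma key_decomp {n d : ℕ} (B : Matrix (Fin n) (Fin n) ℝ)
    (Q : Matrix (Fin n) (Fin d) ℝ) (hQ : Qᵀ * Q = 1)
    (X : Matrix (Fin d) (Fin d) ℝ) :
    (∑ i, ∑ j, ((B - Q * X * Qᵀ) i j) ^ 2)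
      = (∑ i, ∑ j, ((B - Q * Qᵀ * B * (Q * Qᵀ)) i j) ^ 2)
        + (∑ i, ∑ j, ((Qᵀ * B * Q - X) i j) ^ 2) := by
  have hQQ : ∀ (p : Type) [Fintype p], ∀ C : Matrix (Fin d) p ℝ, Qᵀ * (Q * C) = C := by
    intro p _ C; rw [← Matrix.mul_assoc, hQ, Matrix.one_mul]
  set A := B - Q * Qᵀ * B * (Q * Qᵀ) with hA
  set M := Qᵀ * B * Q - X with hM
  have hdecomp : B - Q * X * Qᵀ = A + Q * M * Qᵀ := by
    have h1 : Q * M * Qᵀ = Q * Qᵀ * B * (Q * Qᵀ) - Q * X * Qᵀ := by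
      simp [hM, Matrix.mul_sub, Matrix.sub_mul, Matrix.mul_assoc]
    rw [h1, hA]; abel
  have hcross : Qᵀ * Aᵀ * Q = 0 := by
    simp [hA, Matrix.transpose_sub, Matrix.transpose_mul, Matrix.sub_mul, Matrix.mul_sub,
      Matrix.mul_assoc, hQ, hQQ]
  rw [frobSq_trace, frobSq_trace, frobSq_trace, hdecomp]
  have expand : (A + Q * M * Qᵀ)ᵀ * (A + Q * M * Qᵀ)
      = Aᵀ * A + Aᵀ * (Q * M * Qᵀ) + (Q * M * Qᵀ)ᵀ * A + (Q * M * Qᵀ)ᵀ * (Q * M * Qᵀ) := by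
    rw [Matrix.transpose_add, Matrix.add_mul, Matrix.mul_add, Matrix.mul_add]; abel
  rw [expand]
  have hcross' : Qᵀ * (Aᵀ * Q) = 0 := by rw [← Matrix.mul_assoc]; exact hcross
  have t1 : Matrix.trace (Aᵀ * (Q * M * Qᵀ)) = 0 := by
    have h1 : Aᵀ * (Q * M * Qᵀ) = Aᵀ * Q * (M * Qᵀ) := by
      rw [Matrix.mul_assoc, Matrix.mul_assoc]
    rw [h1, Matrix.trace_mul_comm]
    have h2 : M * Qᵀ * (Aᵀ * Q) = M * (Qᵀ * (Aᵀ * Q)) := by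
      rw [Matrix.mul_assoc]
    rw [h2, hcross', Matrix.mul_zero, Matrix.trace_zero]
  have t2 : Matrix.trace ((Q * M * Qᵀ)ᵀ * A) = 0 := by
    have h1 : (Q * M * Qᵀ)ᵀ * A = (Aᵀ * (Q * M * Qᵀ))ᵀ := by
      simp [Matrix.transpose_mul, Matrix.transpose_transpose, Matrix.mul_assoc]
    rw [h1, Matrix.trace_transpose, t1]
  have t3 : Matrix.trace ((Q * M * Qᵀ)ᵀ * (Q * M * Qᵀ)) = Matrix.trace (Mᵀ * M) := by
    have h : (Q * M * Qᵀ)ᵀ * (Q * M * Qᵀ) = Q * (Mᵀ * M) * Qᵀ := by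
      simp only [Matrix.transpose_mul, Matrix.transpose_transpose, Matrix.mul_assoc]
      rw [hQQ]
    rw [h, Matrix.mul_assoc, Matrix.trace_mul_comm, Matrix.mul_assoc, hQ, Matrix.mul_one]
  rw [Matrix.trace_add, Matrix.trace_add, Matrix.trace_add, t1, t2, t3]
  ring

/-- Among all rank-≤k matrices `Y`, the truncation `Bk = ⟦Qᵀ B Q⟧_k` minimizes
`‖B − Q Y Qᵀ‖_F`. -/
theorem stmt2 {n d k : ℕ} (B : Matrix (Fin n) (Fin n) ℝ) (hB : B.IsSymm)
    (Q : Matrix (Fin n) (Fin d) ℝ) (hQ : Qᵀ * Q = 1)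
    (Bk : Matrix (Fin d) (Fin d) ℝ) (hBk_rank : Bk.rank ≤ k)
    (hBk_best : ∀ N : Matrix (Fin d) (Fin d) ℝ, N.rank ≤ k →
      frobNorm (Qᵀ * B * Q - Bk) ≤ frobNorm (Qᵀ * B * Q - N)) :
    ∀ Y : Matrix (Fin d) (Fin d) ℝ, Y.rank ≤ k →
      frobNorm (B - Q * Bk * Qᵀ) ≤ frobNorm (B - Q * Y * Qᵀ) := by
  intro Y hY
  have hnonneg : ∀ {p q : ℕ} (M : Matrix (Fin p) (Fin q) ℝ),
      (0:ℝ) ≤ ∑ i, ∑ j, (M i j) ^ 2 := by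
    intro p q M
    exact Finset.sum_nonneg fun i _ => Finset.sum_nonneg fun j _ => sq_nonneg _
  have hsq : (∑ i, ∑ j, ((Qᵀ * B * Q - Bk) i j) ^ 2)
      ≤ ∑ i, ∑ j, ((Qᵀ * B * Q - Y) i j) ^ 2 := by
    have h := hBk_best Y hY
    unfold frobNorm at h
    exact (Real.sqrt_le_sqrt_iff (hnonneg _)).mp (by simpa using h)
  unfold frobNorm
  apply Real.sqrt_le_sqrt
  rw [key_decomp B Q hQ Bk, key_decomp B Q hQ Y]
  linarith
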